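/- For LP-relaxation-feasible x of an MWTM instance, summing the task constraints gives Σ_{i,j} x_{i,j} = m, and summing the path constraints over the set Λ_e of effective leaves gives Σ_{k ∈ Λ_e} Σ_{i ∈ Π_k} Σ_j x_{i,j} ≤ |Λ_e|; since the left sum dominates Σ_{i,j} x_{i,j} (every positive-x node lies on a path to some effective leaf), m ≤ |Λ_e|. -/

import Mathlib

attribute [local instance] Classical.propDecidable

/-- A rooted tree on a finite vertex type `V`, given by a parent function. -/
structure OrgTree (V : Type) [Fintype V] [DecidableEq V] where
  root : V
  parent : V → V
  parent_root : parent root = root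
  reach : ∀ v : V, ∃ k : ℕ, parent^[k] v = root

variable {V : Type} [Fintype V] [DecidableEq V]

/-- `T.Anc u v` : `u` is a (weak) ancestor of `v`, i.e. `u` lies on the
path from the root to `v`. -/
def OrgTree.Anc (T : OrgTree V) (u v : V) : Prop :=
  ∃ k : ℕ, T.parent^[k] v = u

/-- A leaf is a node with no children. -/
def OrgTree.IsLeaf (T : OrgTree V) (v : V) : Prop :=
  ∀ u : V, T.parent u = v → u = v

/-- An antichain: no element is a (weak) ancestor of another distinct element. -/
def OrgTree.IsAntichain (T : OrgTree V) (S : Set V) : Prop :=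
  ∀ u ∈ S, ∀ v ∈ S, u ≠ v → ¬ T.Anc u v

/-- Feasibility for the LP relaxation of the MWTM ILP:
nonnegativity, per-node sums at most 1, per-task sums equal to 1, and
for every leaf the total assignment along the root-to-leaf path at most 1. -/
def LPFeasible (T : OrgTree V) (m : ℕ) (x : V → Fin m → ℝ) : Prop :=
  (∀ i j, 0 ≤ x i j) ∧
  (∀ i : V, ∑ j : Fin m, x i j ≤ 1) ∧
  (∀ j : Fin m, ∑ i : V, x i j = 1) ∧
  (∀ k : V, T.IsLeaf k →
    ∑ i ∈ Finset.univ.filter (fun i => T.Anc i k), ∑ j : Fin m, x i j ≤ 1)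

/-- An effective leaf w.r.t. `x`: a node with a positive assignment none of
whose strict descendants has a positive assignment. -/
def EffLeaf (T : OrgTree V) (m : ℕ) (x : V → Fin m → ℝ) (i : V) : Prop :=
  (∃ j : Fin m, 0 < x i j) ∧
    ∀ v : V, T.Anc i v → v ≠ i → ∀ j : Fin m, x v j = 0

/-! Below every node carrying a positive assignment there is an effective leaf `k` (descend as
long as possible: ancestry is antisymmetric, so descendant sets shrink strictly). Hence the path
sums over the effective leaves cover the total assignment `m`, while each of them is at most `1`
because the path to any node extends to a path to a leaf. -/

theorem Finset.sum_biUnion_le_sum_sum {ι α M : Type*} [DecidableEq α] [AddCommMonoid M]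
    [PartialOrder M] [IsOrderedAddMonoid M] {f : α → M} (hf : ∀ a, 0 ≤ f a) (s : Finset ι)
    (t : ι → Finset α) : ∑ a ∈ s.biUnion t, f a ≤ ∑ i ∈ s, ∑ a ∈ t i, f a := by
  classical
  induction s using Finset.induction_on with
  | empty => simp
  | insert i s hi ih =>
    rw [Finset.biUnion_insert, Finset.sum_insert hi]
    calc ∑ a ∈ t i ∪ s.biUnion t, f a
        ≤ ∑ a ∈ t i ∪ s.biUnion t, f a + ∑ a ∈ t i ∩ s.biUnion t, f a :=
          le_add_of_nonneg_right (Finset.sum_nonneg fun a _ => hf a)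
      _ = ∑ a ∈ t i, f a + ∑ a ∈ s.biUnion t, f a := Finset.sum_union_inter
      _ ≤ ∑ a ∈ t i, f a + ∑ j ∈ s, ∑ a ∈ t j, f a := by gcongr

namespace OrgTree

variable (T : OrgTree V)

noncomputable def path (k : V) : Finset V := Finset.univ.filter (T.Anc · k)

noncomputable def descendants (k : V) : Finset V := Finset.univ.filter (T.Anc k ·)

theorem anc_refl (v : V) : T.Anc v v := ⟨0, rfl⟩

variable {T}

theorem Anc.trans {a b c : V} (hab : T.Anc a b) (hbc : T.Anc b c) : T.Anc a c := by
  obtain ⟨k, rfl⟩ := hab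
  obtain ⟨l, rfl⟩ := hbc
  exact ⟨k + l, Function.iterate_add_apply _ _ _ _⟩

-- `v` is periodic under `parent`, yet its orbit reaches the fixed point `root`; so `v = root`.
theorem Anc.antisymm {u v : V} (huv : T.Anc u v) (hvu : T.Anc v u) : u = v := by
  obtain ⟨a, rfl⟩ := huv
  obtain ⟨b, hb⟩ := hvu
  obtain ⟨n, hn⟩ := T.reach v
  have hper : Function.IsPeriodicPt T.parent (b + a) v := by
    rw [Function.IsPeriodicPt, Function.IsFixedPt, Function.iterate_add_apply, hb]
  rcases Nat.eq_zero_or_pos a with rfl | ha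
  · rfl
  have hv : v = T.root := by
    rw [← (hper.mul_const n).eq, (Nat.sub_add_cancel (Nat.le_mul_of_pos_left n (by omega))).symm,
      Function.iterate_add_apply, hn, Function.iterate_fixed T.parent_root]
  rw [hv, Function.iterate_fixed T.parent_root]

theorem card_descendants_lt {k v : V} (hkv : T.Anc k v) (hne : v ≠ k) :
    (T.descendants v).card < (T.descendants k).card := by
  refine Finset.card_lt_card ((Finset.ssubset_iff_of_subset ?_).2 ⟨k, ?_, ?_⟩)
  · intro w hw
    simp only [descendants, Finset.mem_filter, Finset.mem_univ, true_and] at hw ⊢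
    exact hkv.trans hw
  · simp [descendants, anc_refl]
  · simpa [descendants] using fun hvk => hne (hvk.antisymm hkv)

theorem exists_anc_maximal {P : V → Prop} {i : V} (hi : P i) :
    ∃ k, T.Anc i k ∧ P k ∧ ∀ v, T.Anc k v → v ≠ k → ¬ P v := by
  obtain ⟨k, hk, hmin⟩ := (Finset.univ.filter fun v => T.Anc i v ∧ P v).exists_min_image
    (fun v => (T.descendants v).card) ⟨i, by simp [anc_refl, hi]⟩
  simp only [Finset.mem_filter, Finset.mem_univ, true_and] at hk
  refine ⟨k, hk.1, hk.2, fun v hkv hne hv => ?_⟩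
  exact (card_descendants_lt hkv hne).not_ge (hmin v (by simp [hk.1.trans hkv, hv]))

theorem exists_isLeaf_anc (k : V) : ∃ l, T.IsLeaf l ∧ T.Anc k l := by
  obtain ⟨l, hkl, -, hmax⟩ := exists_anc_maximal (T := T) (P := fun _ => True) trivial
  exact ⟨l, fun u hu => by_contra fun hne => hmax u ⟨1, hu⟩ hne trivial, hkl⟩

theorem path_subset_of_anc {k l : V} (hkl : T.Anc k l) : T.path k ⊆ T.path l := by
  intro i hi
  simp only [path, Finset.mem_filter, Finset.mem_univ, true_and] at hi ⊢
  exact hi.trans hkl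

end OrgTree

noncomputable def effLeaves (T : OrgTree V) (m : ℕ) (x : V → Fin m → ℝ) : Finset V :=
  Finset.univ.filter (EffLeaf T m x)

theorem exists_effLeaf_anc {T : OrgTree V} {m : ℕ} {x : V → Fin m → ℝ}
    (hnn : ∀ i j, 0 ≤ x i j) {i : V} {j : Fin m} (hij : 0 < x i j) :
    ∃ k, EffLeaf T m x k ∧ T.Anc i k := by
  obtain ⟨k, hik, hpos, hmax⟩ := T.exists_anc_maximal (P := fun v => ∃ j, 0 < x v j) ⟨j, hij⟩
  refine ⟨k, ⟨hpos, fun v hkv hne j => ?_⟩, hik⟩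
  exact le_antisymm (not_lt.1 fun h => hmax v hkv hne ⟨j, h⟩) (hnn v j)

namespace LPFeasible

variable {T : OrgTree V} {m : ℕ} {x : V → Fin m → ℝ}

theorem sum_eq (hx : LPFeasible T m x) : ∑ i : V, ∑ j : Fin m, x i j = m := by
  rw [Finset.sum_comm]
  simp [hx.2.2.1]

theorem sum_path_le_one (hx : LPFeasible T m x) (k : V) :
    ∑ i ∈ T.path k, ∑ j : Fin m, x i j ≤ 1 := by
  obtain ⟨l, hl, hkl⟩ := T.exists_isLeaf_anc k
  exact (Finset.sum_le_sum_of_subset_of_nonneg (OrgTree.path_subset_of_anc hkl)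
    fun i _ _ => Finset.sum_nonneg fun j _ => hx.1 i j).trans (hx.2.2.2 l hl)

theorem sum_effLeaves_path_le_card (hx : LPFeasible T m x) :
    ∑ k ∈ effLeaves T m x, ∑ i ∈ T.path k, ∑ j : Fin m, x i j ≤ (effLeaves T m x).card := by
  simpa using Finset.sum_le_sum fun k (_ : k ∈ effLeaves T m x) => hx.sum_path_le_one k

theorem sum_le_sum_effLeaves_path (hx : LPFeasible T m x) :
    ∑ i : V, ∑ j : Fin m, x i j ≤ ∑ k ∈ effLeaves T m x, ∑ i ∈ T.path k, ∑ j : Fin m, x i j := by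
  have hnn : ∀ i, 0 ≤ ∑ j : Fin m, x i j := fun i => Finset.sum_nonneg fun j _ => hx.1 i j
  refine le_of_eq_of_le ?_ (Finset.sum_biUnion_le_sum_sum hnn _ _)
  refine (Finset.sum_subset (Finset.subset_univ _) fun i _ hi => ?_).symm
  by_contra hne
  obtain ⟨j, -, hj⟩ := Finset.exists_ne_zero_of_sum_ne_zero hne
  obtain ⟨k, hk, hik⟩ := exists_effLeaf_anc hx.1 ((hx.1 i j).lt_of_ne' hj)
  exact hi (Finset.mem_biUnion.2
    ⟨k, by simpa [effLeaves] using hk, by simpa [OrgTree.path] using hik⟩)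

end LPFeasible

/-- For an LP-feasible `x`: summing the task constraints gives
`Σ_{i,j} x_{i,j} = m`; summing the path constraints over the effective leaves
`Λ_e` gives `Σ_{k ∈ Λ_e} Σ_{i ∈ Π_k} Σ_j x_{i,j} ≤ |Λ_e|`; and since the left
sum dominates the total, `m ≤ |Λ_e|`. -/
theorem lp_counting (T : OrgTree V) (m : ℕ) (x : V → Fin m → ℝ)
    (hx : LPFeasible T m x) :
    (∑ i : V, ∑ j : Fin m, x i j = (m : ℝ)) ∧
      (∑ k ∈ Finset.univ.filter (fun k => EffLeaf T m x k),
          ∑ i ∈ Finset.univ.filter (fun i => T.Anc i k), ∑ j : Fin m, x i j ≤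
        ((Finset.univ.filter (fun k => EffLeaf T m x k)).card : ℝ)) ∧
      m ≤ (Finset.univ.filter (fun k => EffLeaf T m x k)).card := by
  have hpaths := hx.sum_effLeaves_path_le_card
  refine ⟨hx.sum_eq, hpaths, ?_⟩
  exact_mod_cast (hx.sum_eq.symm.trans_le hx.sum_le_sum_effLeaves_path).trans hpaths
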